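/- Assume 𝕜 contains a primitive d-th root of unity ξ. Then the family {ē(A) : A ∈ SetPar_n} is a complete set of pairwise orthogonal idempotents of Y_{d,n}(q): ē(A) ē(B) = δ_{A,B} ē(A) for all A, B ∈ SetPar_n, and Σ_{A ∈ SetPar_n} ē(A) = 1. -/

import Mathlib

open scoped Classical

noncomputable section

namespace YH

/-- Generators of the Yokonuma–Hecke algebra (0-based indexing):
`g a h` corresponds to the generator `g_{a+1}` of the paper, and `t a` to `t_{a+1}`. -/
inductive Gen (n : ℕ) : Type
  | g : (a : ℕ) → a + 1 < n → Gen n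
  | t : Fin n → Gen n

variable (𝕜 : Type) [Field 𝕜] (d n : ℕ) (q : 𝕜)

/-- The free algebra on the generators. -/
abbrev F : Type := FreeAlgebra 𝕜 (Gen n)

def G (a : ℕ) (h : a + 1 < n) : F 𝕜 n := FreeAlgebra.ι 𝕜 (Gen.g a h)

def T (a : Fin n) : F 𝕜 n := FreeAlgebra.ι 𝕜 (Gen.t a)

/-- The simple transposition `σ_a = (a, a+1)` (0-based). -/
def sw (a : ℕ) (h : a + 1 < n) : Equiv.Perm (Fin n) :=
  Equiv.swap ⟨a, by omega⟩ ⟨a + 1, h⟩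

/-- The element `e_a = (1/d) Σ_{r=0}^{d-1} t_a^r t_{a+1}^{-r}` of the free algebra, where
`t_{a+1}^{-r}` is represented by `t_{a+1}^{(d-r) % d}` (they agree once `t^d = 1` is imposed). -/
def Efree (a : ℕ) (h : a + 1 < n) : F 𝕜 n :=
  (d : 𝕜)⁻¹ • ∑ r ∈ Finset.range d,
    T 𝕜 n ⟨a, by omega⟩ ^ r * T 𝕜 n ⟨a + 1, h⟩ ^ ((d - r) % d)

/-- The defining relations of the Yokonuma–Hecke algebra `Y_{d,n}(q)`. -/
inductive Rel : F 𝕜 n → F 𝕜 n → Prop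
  | torder (a : Fin n) : Rel (T 𝕜 n a ^ d) 1
  | tcomm (a b : Fin n) : Rel (T 𝕜 n a * T 𝕜 n b) (T 𝕜 n b * T 𝕜 n a)
  | tg (a : Fin n) (b : ℕ) (hb : b + 1 < n) :
      Rel (T 𝕜 n a * G 𝕜 n b hb) (G 𝕜 n b hb * T 𝕜 n (sw n b hb a))
  | quad (a : ℕ) (h : a + 1 < n) :
      Rel (G 𝕜 n a h ^ 2)
        (algebraMap 𝕜 (F 𝕜 n) q + (q - 1) • (Efree 𝕜 d n a h * G 𝕜 n a h))
  | braid (a : ℕ) (h : a + 2 < n) :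
      Rel (G 𝕜 n a (by omega) * G 𝕜 n (a + 1) h * G 𝕜 n a (by omega))
        (G 𝕜 n (a + 1) h * G 𝕜 n a (by omega) * G 𝕜 n (a + 1) h)
  | gcomm (a b : ℕ) (ha : a + 1 < n) (hb : b + 1 < n) (hab : a + 1 < b) :
      Rel (G 𝕜 n a ha * G 𝕜 n b hb) (G 𝕜 n b hb * G 𝕜 n a ha)

/-- The Yokonuma–Hecke algebra `Y_{d,n}(q)`. -/
abbrev Y : Type := RingQuot (Rel 𝕜 d n q)

def π : F 𝕜 n →ₐ[𝕜] Y 𝕜 d n q := RingQuot.mkAlgHom 𝕜 (Rel 𝕜 d n q)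

/-- The generator `g_{a+1}` of `Y_{d,n}(q)` (0-based: `g a h`). -/
def g (a : ℕ) (h : a + 1 < n) : Y 𝕜 d n q := π 𝕜 d n q (G 𝕜 n a h)

/-- The generator `t_{a+1}` of `Y_{d,n}(q)` (0-based: `t a`). -/
def t (a : Fin n) : Y 𝕜 d n q := π 𝕜 d n q (T 𝕜 n a)

/-- The idempotent `e_a` in `Y_{d,n}(q)`. -/
def eA (a : ℕ) (h : a + 1 < n) : Y 𝕜 d n q := π 𝕜 d n q (Efree 𝕜 d n a h)

/-- `(1/d) Σ_{r=0}^{d-1} t_a^r t_b^{-r}` in `Y_{d,n}(q)`, with `t_b^{-r}` written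
`t_b^{(d-r) % d}`. -/
def eabAux (a b : Fin n) : Y 𝕜 d n q :=
  (d : 𝕜)⁻¹ • ∑ r ∈ Finset.range d, t 𝕜 d n q a ^ r * t 𝕜 d n q b ^ ((d - r) % d)

/-- The element `e_{ab}` (symmetrized so that `e_{ba} = e_{ab}`). -/
def eab (a b : Fin n) : Y 𝕜 d n q :=
  if (a : ℕ) ≤ (b : ℕ) then eabAux 𝕜 d n q a b else eabAux 𝕜 d n q b a

/-- Set partitions of `{1, …, n}` are identified with equivalence relations, i.e. with
`Setoid (Fin n)`; `a ∼_A b` is `A.r a b`. -/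
abbrev SetPar (n : ℕ) := Setoid (Fin n)

/-- `e(A) = ∏_{a ∼_A b, a ≠ b} e_{ab}` (the factors commute, so the product may be
taken in any fixed order). -/
def eSet (A : Setoid (Fin n)) : Y 𝕜 d n q :=
  (((List.finRange n) ×ˢ (List.finRange n)).map
    (fun p => if A.r p.1 p.2 ∧ p.1 ≠ p.2 then eab 𝕜 d n q p.1 p.2 else 1)).prod

/-- `e(j) = ∏_{a=1}^n ((1/d) Σ_{r=0}^{d-1} ξ^{-j_a r} t_a^r)` for `j ∈ (ℤ/dℤ)^n`. -/
def ej (ξ : 𝕜) (j : Fin n → ZMod d) : Y 𝕜 d n q :=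
  ((List.finRange n).map (fun a =>
    (d : 𝕜)⁻¹ • ∑ r ∈ Finset.range d,
      ξ ^ (((-(j a)) * (r : ZMod d)).val) • t 𝕜 d n q a ^ r)).prod

/-- `J_A = { j ∈ (ℤ/dℤ)^n : j_a = j_b ⇔ a ∼_A b }`. -/
def JA [NeZero d] (A : Setoid (Fin n)) : Finset (Fin n → ZMod d) :=
  Finset.univ.filter (fun j => ∀ a b : Fin n, j a = j b ↔ A.r a b)

/-- `ē(A) = Σ_{j ∈ J_A} e(j)`. -/
def ebar [NeZero d] (ξ : 𝕜) (A : Setoid (Fin n)) : Y 𝕜 d n q :=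
  ∑ j ∈ JA d n A, ej 𝕜 d n q ξ j

/-- The Jucys–Murphy elements: `X 0 = X_1 = 1` and `X (a+1) = X_{a+2} = q⁻¹ g_{a+1} X_{a+1} g_{a+1}`
(0-based indexing: `X a h` is the paper's `X_{a+1}`). -/
def X : (a : ℕ) → a < n → Y 𝕜 d n q
  | 0, _ => 1
  | a + 1, h => q⁻¹ • (g 𝕜 d n q a h * X a (by omega) * g 𝕜 d n q a h)

/-- The action of a permutation on set partitions (equivalence relations). -/
def permSetoid (σ : Equiv.Perm (Fin n)) (A : Setoid (Fin n)) : Setoid (Fin n) where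
  r x y := A.r (σ.symm x) (σ.symm y)
  iseqv := ⟨fun _ => A.iseqv.refl _, fun h => A.iseqv.symm h, fun h h' => A.iseqv.trans h h'⟩

instance : Finite (Setoid (Fin n)) :=
  Finite.of_injective (fun A : Setoid (Fin n) => A.r)
    (fun A B h => by cases A; cases B; simp only at h; subst h; rfl)

noncomputable instance : Fintype (Setoid (Fin n)) := Fintype.ofFinite _

end YH

namespace YH

variable {𝕜 : Type} [Field 𝕜] {d n : ℕ} {q : 𝕜}

section aux

lemma pow_mod' {d : ℕ} {ξ : 𝕜} (hξd : ξ ^ d = 1) (m : ℕ) : ξ ^ m = ξ ^ (m % d) := by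
  conv_lhs => rw [← Nat.div_add_mod m d]
  rw [pow_add, pow_mul, hξd, one_pow, one_mul]

lemma zeta_add {d : ℕ} [NeZero d] {ξ : 𝕜} (hξd : ξ ^ d = 1) (x y : ZMod d) :
    ξ ^ (x + y).val = ξ ^ x.val * ξ ^ y.val := by
  rw [ZMod.val_add, ← pow_mod' hξd, pow_add]

lemma zmod_sum_range {d : ℕ} [NeZero d] {M : Type*} [AddCommMonoid M] (f : ZMod d → M) :
    ∑ r : ZMod d, f r = ∑ r ∈ Finset.range d, f (r : ZMod d) := by
  refine Finset.sum_nbij' (fun x => x.val) (fun r => (r : ZMod d)) ?_ ?_ ?_ ?_ ?_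
  · intro x _; exact Finset.mem_range.2 (ZMod.val_lt x)
  · intro r _; exact Finset.mem_univ _
  · intro x _; exact ZMod.natCast_rightInverse x
  · intro r hr; exact ZMod.val_cast_of_lt (Finset.mem_range.1 hr)
  · intro x _; rw [ZMod.natCast_rightInverse x]

lemma char_sum {d : ℕ} [NeZero d] {ξ : 𝕜} (hξ : IsPrimitiveRoot ξ d) (m : ZMod d) :
    ∑ r : ZMod d, ξ ^ ((m * r).val) = if m = 0 then (d : 𝕜) else 0 := by
  rw [zmod_sum_range]
  by_cases hm : m = 0
  · simp [hm, ZMod.val_zero, Finset.sum_const]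
  · rw [if_neg hm]
    have hcast : ∀ r ∈ Finset.range d, ξ ^ ((m * (r : ZMod d)).val) = (ξ ^ m.val) ^ r := by
      intro r hr
      rw [ZMod.val_mul, ← pow_mod' hξ.pow_eq_one, ZMod.val_cast_of_lt (Finset.mem_range.1 hr),
        pow_mul]
    rw [Finset.sum_congr rfl hcast, geom_sum_eq
      (hξ.pow_ne_one_of_pos_of_lt (ZMod.val_pos.2 hm).ne' (ZMod.val_lt m))]
    rw [← pow_mul, mul_comm, pow_mul, hξ.pow_eq_one, one_pow, sub_self, zero_div]

end aux

lemma t_comm (a b : Fin n) : Commute (t 𝕜 d n q a) (t 𝕜 d n q b) := by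
  have h := RingQuot.mkAlgHom_rel 𝕜 (@Rel.tcomm 𝕜 _ d n q a b)
  have h' : t 𝕜 d n q a * t 𝕜 d n q b = t 𝕜 d n q b * t 𝕜 d n q a := by
    simpa only [map_mul, t, π] using h
  exact h'

lemma t_pow_d (a : Fin n) : t 𝕜 d n q a ^ d = 1 := by
  have h := RingQuot.mkAlgHom_rel 𝕜 (@Rel.torder 𝕜 _ d n q a)
  simpa only [map_pow, map_one, t, π] using h

lemma t_pow_mod (a : Fin n) (m : ℕ) : t 𝕜 d n q a ^ m = t 𝕜 d n q a ^ (m % d) := by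
  conv_lhs => rw [← Nat.div_add_mod m d]
  rw [pow_add, pow_mul, t_pow_d, one_pow, one_mul]

/-- The basic idempotent `p_a(k)`. -/
def pel (𝕜 : Type) [Field 𝕜] (d n : ℕ) (q ξ : 𝕜) (a : Fin n) (k : ZMod d) : Y 𝕜 d n q :=
  (d : 𝕜)⁻¹ • ∑ r ∈ Finset.range d, ξ ^ ((-k * (r : ZMod d)).val) • t 𝕜 d n q a ^ r

lemma ej_eq (ξ : 𝕜) (j : Fin n → ZMod d) :
    ej 𝕜 d n q ξ j = ((List.finRange n).map (fun a => pel 𝕜 d n q ξ a (j a))).prod := rfl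

lemma pel_eq_zsum [NeZero d] (ξ : 𝕜) (a : Fin n) (k : ZMod d) :
    pel 𝕜 d n q ξ a k
      = (d : 𝕜)⁻¹ • ∑ r : ZMod d, ξ ^ ((-k * r).val) • t 𝕜 d n q a ^ r.val := by
  rw [pel, zmod_sum_range (fun r : ZMod d => ξ ^ ((-k * r).val) • t 𝕜 d n q a ^ r.val)]
  congr 1
  refine Finset.sum_congr rfl fun r hr => ?_
  rw [ZMod.val_cast_of_lt (Finset.mem_range.1 hr)]

lemma pel_comm (ξ : 𝕜) (a b : Fin n) (k k' : ZMod d) :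
    Commute (pel 𝕜 d n q ξ a k) (pel 𝕜 d n q ξ b k') := by
  rw [pel, pel]
  have h1 : Commute (∑ r ∈ Finset.range d, ξ ^ ((-k * (r : ZMod d)).val) • t 𝕜 d n q a ^ r)
      (∑ s ∈ Finset.range d, ξ ^ ((-k' * (s : ZMod d)).val) • t 𝕜 d n q b ^ s) := by
    refine Commute.sum_left _ _ _ fun r _ => ?_
    refine Commute.sum_right _ _ _ fun s _ => ?_
    exact Commute.smul_right (Commute.smul_left (Commute.pow_pow (t_comm a b) r s) _) _
  exact Commute.smul_right (Commute.smul_left h1 _) _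

lemma pel_mul_pel [NeZero d] (hdk : (d : 𝕜) ≠ 0) {ξ : 𝕜} (hξ : IsPrimitiveRoot ξ d)
    (a : Fin n) (k k' : ZMod d) :
    pel 𝕜 d n q ξ a k * pel 𝕜 d n q ξ a k'
      = if k = k' then pel 𝕜 d n q ξ a k else 0 := by
  have hξd : ξ ^ d = 1 := hξ.pow_eq_one
  have h1 : ∀ r s : ZMod d,
      (ξ ^ ((-k * r).val) • t 𝕜 d n q a ^ r.val) *
        (ξ ^ ((-k' * s).val) • t 𝕜 d n q a ^ s.val)
      = (ξ ^ (((k' - k) * r).val) * ξ ^ ((-k' * (r + s)).val))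
          • t 𝕜 d n q a ^ ((r + s).val) := by
    intro r s
    have e1 : t 𝕜 d n q a ^ r.val * t 𝕜 d n q a ^ s.val = t 𝕜 d n q a ^ ((r + s).val) := by
      rw [← pow_add, t_pow_mod, ZMod.val_add]
    have e2 : ξ ^ ((-k * r).val) * ξ ^ ((-k' * s).val)
        = ξ ^ (((k' - k) * r).val) * ξ ^ ((-k' * (r + s)).val) := by
      rw [← zeta_add hξd, ← zeta_add hξd]
      congr 1
      ring_nf
    rw [smul_mul_smul_comm, e1, e2]
  have key : (∑ r : ZMod d, ξ ^ ((-k * r).val) • t 𝕜 d n q a ^ r.val) *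
      (∑ s : ZMod d, ξ ^ ((-k' * s).val) • t 𝕜 d n q a ^ s.val)
      = ∑ u : ZMod d, ((∑ r : ZMod d, ξ ^ (((k' - k) * r).val)) * ξ ^ ((-k' * u).val))
          • t 𝕜 d n q a ^ u.val := by
    rw [Finset.sum_mul_sum]
    have h2 : ∀ r : ZMod d,
        (∑ s : ZMod d, (ξ ^ ((-k * r).val) • t 𝕜 d n q a ^ r.val) *
            (ξ ^ ((-k' * s).val) • t 𝕜 d n q a ^ s.val))
        = ∑ u : ZMod d,
            (ξ ^ (((k' - k) * r).val) * ξ ^ ((-k' * u).val)) • t 𝕜 d n q a ^ u.val := by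
      intro r
      refine Fintype.sum_equiv (Equiv.addLeft r) _ _ fun s => ?_
      simpa only [Equiv.coe_addLeft] using h1 r s
    rw [Finset.sum_congr rfl fun r _ => h2 r, Finset.sum_comm]
    refine Finset.sum_congr rfl fun u _ => ?_
    rw [← Finset.sum_smul, ← Finset.sum_mul]
  rw [pel_eq_zsum, pel_eq_zsum, smul_mul_assoc, mul_smul_comm, key, char_sum hξ]
  by_cases hkk : k = k'
  · rw [if_pos hkk, if_pos (by rw [hkk, sub_self])]
    have : ∀ u : ZMod d, ((d : 𝕜) * ξ ^ ((-k' * u).val)) • t 𝕜 d n q a ^ u.val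
        = (d : 𝕜) • (ξ ^ ((-k' * u).val) • t 𝕜 d n q a ^ u.val) := by
      intro u; rw [mul_smul]
    rw [Finset.sum_congr rfl fun u _ => this u, ← Finset.smul_sum, smul_smul, smul_smul]
    rw [hkk]
    congr 1
    field_simp
  · rw [if_neg hkk, if_neg (fun h => hkk (sub_eq_zero.mp h).symm)]
    simp

lemma pel_sum [NeZero d] (hdk : (d : 𝕜) ≠ 0) {ξ : 𝕜} (hξ : IsPrimitiveRoot ξ d) (a : Fin n) :
    ∑ k : ZMod d, pel 𝕜 d n q ξ a k = 1 := by
  have hd0 : 0 < d := Nat.pos_of_ne_zero (NeZero.ne d)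
  simp only [pel]
  rw [← Finset.smul_sum, Finset.sum_comm]
  have h1 : ∀ r ∈ Finset.range d,
      (∑ k : ZMod d, ξ ^ ((-k * (r : ZMod d)).val) • t 𝕜 d n q a ^ r)
      = (if r = 0 then (d : 𝕜) else 0) • t 𝕜 d n q a ^ r := by
    intro r hr
    rw [← Finset.sum_smul]
    congr 1
    have h2 : ∀ k : ZMod d, ξ ^ ((-k * (r : ZMod d)).val) = ξ ^ (((-(r : ZMod d)) * k).val) := by
      intro k; congr 1; ring_nf
    rw [Finset.sum_congr rfl fun k _ => h2 k, char_sum hξ]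
    have h4 : (-(r : ZMod d) = 0) ↔ r = 0 := by
      rw [neg_eq_zero, ZMod.natCast_eq_zero_iff]
      exact ⟨fun h => Nat.eq_zero_of_dvd_of_lt h (Finset.mem_range.1 hr), fun h => by simp [h]⟩
    simp only [h4]
  rw [Finset.sum_congr rfl h1]
  have h3 : ∀ r ∈ Finset.range d, ((if r = 0 then (d : 𝕜) else 0) • t 𝕜 d n q a ^ r)
      = (if r = 0 then (d : 𝕜) • t 𝕜 d n q a ^ r else 0) := by
    intro r _
    split <;> simp
  rw [Finset.sum_congr rfl h3, Finset.sum_ite_eq' (Finset.range d) 0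
      (fun r => (d : 𝕜) • t 𝕜 d n q a ^ r), if_pos (Finset.mem_range.2 hd0)]
  rw [pow_zero, smul_smul, inv_mul_cancel₀ hdk, one_smul]

lemma pel_commute_list_prod (ξ : 𝕜) (a : Fin n) (k : ZMod d) {m : ℕ}
    (v : Fin m → Fin n) (c : Fin m → ZMod d) :
    Commute (pel 𝕜 d n q ξ a k)
      (((List.finRange m).map (fun i => pel 𝕜 d n q ξ (v i) (c i))).prod) := by
  refine Commute.list_prod_right _ _ fun x hx => ?_
  obtain ⟨i, _, rfl⟩ := List.mem_map.1 hx
  exact pel_comm ξ a (v i) k (c i)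

lemma prod_mul_prod (ξ : 𝕜) : ∀ (m : ℕ) (v : Fin m → Fin n) (j j' : Fin m → ZMod d),
    ((List.finRange m).map (fun i => pel 𝕜 d n q ξ (v i) (j i))).prod *
      ((List.finRange m).map (fun i => pel 𝕜 d n q ξ (v i) (j' i))).prod =
    ((List.finRange m).map
      (fun i => pel 𝕜 d n q ξ (v i) (j i) * pel 𝕜 d n q ξ (v i) (j' i))).prod := by
  intro m
  induction m with
  | zero => intro v j j'; simp [List.finRange_zero]
  | succ m ih =>
    intro v j j'
    simp only [List.finRange_succ, List.map_cons, List.prod_cons, List.map_map,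
      Function.comp_def]
    set P := ((List.finRange m).map (fun i => pel 𝕜 d n q ξ (v i.succ) (j i.succ))).prod with hP
    set P' := ((List.finRange m).map (fun i => pel 𝕜 d n q ξ (v i.succ) (j' i.succ))).prod
      with hP'
    have hc : P * pel 𝕜 d n q ξ (v 0) (j' 0) = pel 𝕜 d n q ξ (v 0) (j' 0) * P :=
      (pel_commute_list_prod ξ (v 0) (j' 0) (fun i => v i.succ) (fun i => j i.succ)).symm.eq
    calc pel 𝕜 d n q ξ (v 0) (j 0) * P * (pel 𝕜 d n q ξ (v 0) (j' 0) * P')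
        = pel 𝕜 d n q ξ (v 0) (j 0) * (P * pel 𝕜 d n q ξ (v 0) (j' 0)) * P' := by
          rw [mul_assoc, mul_assoc, mul_assoc]
      _ = pel 𝕜 d n q ξ (v 0) (j 0) * pel 𝕜 d n q ξ (v 0) (j' 0) * (P * P') := by
          rw [hc]; rw [mul_assoc, mul_assoc, mul_assoc]
      _ = pel 𝕜 d n q ξ (v 0) (j 0) * pel 𝕜 d n q ξ (v 0) (j' 0) *
            ((List.finRange m).map (fun i => pel 𝕜 d n q ξ (v i.succ) (j i.succ) *
              pel 𝕜 d n q ξ (v i.succ) (j' i.succ))).prod := by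
          rw [ih (fun i => v i.succ) (fun i => j i.succ) (fun i => j' i.succ)]

lemma ej_mul_ej [NeZero d] (hdk : (d : 𝕜) ≠ 0) {ξ : 𝕜} (hξ : IsPrimitiveRoot ξ d)
    (j j' : Fin n → ZMod d) :
    ej 𝕜 d n q ξ j * ej 𝕜 d n q ξ j' = if j = j' then ej 𝕜 d n q ξ j else 0 := by
  rw [ej_eq, ej_eq]
  have hp := prod_mul_prod (𝕜 := 𝕜) (d := d) (n := n) (q := q) ξ n id j j'
  simp only [id] at hp
  rw [hp]
  by_cases hjj : j = j'
  · subst hjj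
    rw [if_pos rfl]
    congr 1
    refine List.map_congr_left fun a _ => ?_
    rw [pel_mul_pel hdk hξ, if_pos rfl]
  · rw [if_neg hjj]
    obtain ⟨i, hi⟩ := Function.ne_iff.1 hjj
    refine List.prod_eq_zero ?_
    refine List.mem_map.2 ⟨i, List.mem_finRange i, ?_⟩
    rw [pel_mul_pel hdk hξ, if_neg hi]

lemma sum_prod_pel [NeZero d] (hdk : (d : 𝕜) ≠ 0) {ξ : 𝕜} (hξ : IsPrimitiveRoot ξ d) :
    ∀ (m : ℕ) (v : Fin m → Fin n),
      ∑ c : Fin m → ZMod d,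
        ((List.finRange m).map (fun i => pel 𝕜 d n q ξ (v i) (c i))).prod = 1 := by
  intro m
  induction m with
  | zero =>
    intro v
    simp [List.finRange_zero]
  | succ m ih =>
    intro v
    rw [← Equiv.sum_comp (Fin.consEquiv (fun _ : Fin (m + 1) => ZMod d))
      (fun c => ((List.finRange (m + 1)).map (fun i => pel 𝕜 d n q ξ (v i) (c i))).prod),
      Fintype.sum_prod_type]
    have hterm : ∀ (k : ZMod d) (c : Fin m → ZMod d),
        ((List.finRange (m + 1)).map
          (fun i => pel 𝕜 d n q ξ (v i) ((Fin.consEquiv (fun _ : Fin (m+1) => ZMod d)) (k, c) i))).prod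
        = pel 𝕜 d n q ξ (v 0) k *
            ((List.finRange m).map (fun i => pel 𝕜 d n q ξ (v i.succ) (c i))).prod := by
      intro k c
      simp only [List.finRange_succ, List.map_cons, List.prod_cons, List.map_map,
        Function.comp_def, Fin.consEquiv, Equiv.coe_fn_mk, Fin.cons_zero, Fin.cons_succ]
    calc ∑ k : ZMod d, ∑ c : Fin m → ZMod d,
          ((List.finRange (m + 1)).map
            (fun i => pel 𝕜 d n q ξ (v i) ((Fin.consEquiv (fun _ : Fin (m+1) => ZMod d)) (k, c) i))).prod
        = ∑ k : ZMod d, ∑ c : Fin m → ZMod d, pel 𝕜 d n q ξ (v 0) k *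
            ((List.finRange m).map (fun i => pel 𝕜 d n q ξ (v i.succ) (c i))).prod := by
          exact Finset.sum_congr rfl fun k _ => Finset.sum_congr rfl fun c _ => hterm k c
      _ = (∑ k : ZMod d, pel 𝕜 d n q ξ (v 0) k) *
            (∑ c : Fin m → ZMod d,
              ((List.finRange m).map (fun i => pel 𝕜 d n q ξ (v i.succ) (c i))).prod) := by
          rw [Finset.sum_mul]
          exact Finset.sum_congr rfl fun k _ => (Finset.mul_sum _ _ _).symm
      _ = 1 := by rw [pel_sum hdk hξ, ih (fun i => v i.succ), one_mul]

lemma sum_ej [NeZero d] (hdk : (d : 𝕜) ≠ 0) {ξ : 𝕜} (hξ : IsPrimitiveRoot ξ d) :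
    ∑ j : Fin n → ZMod d, ej 𝕜 d n q ξ j = 1 := by
  have h := sum_prod_pel (𝕜 := 𝕜) (d := d) (n := n) (q := q) hdk hξ n id
  simp only [id] at h
  simpa only [ej_eq] using h

lemma mem_JA_iff [NeZero d] (A : Setoid (Fin n)) (j : Fin n → ZMod d) :
    j ∈ JA d n A ↔ Setoid.ker j = A := by
  rw [JA, Finset.mem_filter]
  simp only [Finset.mem_univ, true_and]
  constructor
  · intro h
    exact Setoid.ext fun a b => h a b
  · intro h a b
    rw [← h]
    exact Iff.rfl

end YH
open YH in
/-- if `𝕜` contains a primitive `d`-th root of unity `ξ`, then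
`{ē(A) : A ∈ SetPar_n}` is a complete set of pairwise orthogonal idempotents of `Y_{d,n}(q)`. -/
theorem statement3 (𝕜 : Type) [Field 𝕜] (d n : ℕ) [NeZero d] (hn : 0 < n)
    (hdk : (d : 𝕜) ≠ 0) (q : 𝕜) (hq0 : q ≠ 0) (hq1 : q ≠ 1)
    (ξ : 𝕜) (hξ : IsPrimitiveRoot ξ d) :
    (∀ A B : Setoid (Fin n),
      ebar 𝕜 d n q ξ A * ebar 𝕜 d n q ξ B = if A = B then ebar 𝕜 d n q ξ A else 0)
    ∧ (∑ A : Setoid (Fin n), ebar 𝕜 d n q ξ A = 1) := by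
  constructor
  · intro A B
    simp only [ebar]
    rw [Finset.sum_mul_sum]
    by_cases hAB : A = B
    · subst hAB
      rw [if_pos rfl]
      refine Finset.sum_congr rfl fun j hj => ?_
      have h1 : ∀ j' ∈ JA d n A, ej 𝕜 d n q ξ j * ej 𝕜 d n q ξ j'
          = if j = j' then ej 𝕜 d n q ξ j else 0 := fun j' _ => ej_mul_ej hdk hξ j j'
      rw [Finset.sum_congr rfl h1,
        Finset.sum_ite_eq (JA d n A) j (fun _ => ej 𝕜 d n q ξ j), if_pos hj]
    · rw [if_neg hAB]
      refine Finset.sum_eq_zero fun j hj => Finset.sum_eq_zero fun j' hj' => ?_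
      rw [ej_mul_ej hdk hξ, if_neg]
      intro h
      subst h
      exact hAB (((mem_JA_iff A j).1 hj).symm.trans ((mem_JA_iff B j).1 hj'))
  · have hJA : ∀ A : Setoid (Fin n),
        JA d n A = Finset.univ.filter (fun j => Setoid.ker j = A) := by
      intro A
      ext j
      rw [mem_JA_iff, Finset.mem_filter]
      simp
    calc ∑ A : Setoid (Fin n), ebar 𝕜 d n q ξ A
        = ∑ A : Setoid (Fin n),
            ∑ j ∈ Finset.univ.filter (fun j => Setoid.ker j = A), ej 𝕜 d n q ξ j := by
          refine Finset.sum_congr rfl fun A _ => ?_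
          simp only [ebar]
          rw [hJA A]
      _ = ∑ j : Fin n → ZMod d, ej 𝕜 d n q ξ j := Finset.sum_fiberwise _ _ _
      _ = 1 := sum_ej hdk hξ

end
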